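/- Let G be a d-regular simple graph on a finite nonempty vertex set V, let K be a natural number with 1 ≤ K, and let u be a real number with u > 2. For B ⊆ V, let n₂(B) be the number of edges of G with both endpoints in B and n₁(B) the number of edges with exactly one endpoint in B (so n₁(B) = |B|·d − 2·n₂(B)). Then there exists a set B ⊆ V with |B| ≤ K and n₁(B) + u·n₂(B) ≥ K·d + (u−2)·K(K−1)/2 if and only if G contains a clique of K vertices. -/

import Mathlib

open Finset

variable {V : Type*} [Fintype V] [DecidableEq V]

/-- `innerEdges G B`: the number of edges of `G` with both endpoints in `B`. -/
def innerEdges (G : SimpleGraph V) [DecidableRel G.Adj] (B : Finset V) : ℕ :=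
  (G.edgeFinset.filter fun e => ∀ v ∈ e, v ∈ B).card

/-- `crossEdges G B`: the number of edges of `G` with exactly one endpoint in `B`. -/
def crossEdges (G : SimpleGraph V) [DecidableRel G.Adj] (B : Finset V) : ℕ :=
  (G.edgeFinset.filter fun e => ∃ v ∈ e, v ∈ B ∧ ∃ w ∈ e, w ∉ B).card

/-
Summing degrees over `B` counts every cross edge once and every inner edge twice, so
`n₁(B) + u·n₂(B) = |B|·d + (u − 2)·n₂(B)`. As `n₂(B) ≤ |B|(|B| − 1)/2`, with equality
exactly when `B` is a clique, and `u > 2`, a set of at most `K` vertices reaches the bound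
only if it is a `K`-clique.
-/

lemma Nat.choose_two_lt_choose_two {m n : ℕ} (hmn : m < n) (hn : 2 ≤ n) :
    m.choose 2 < n.choose 2 := by
  obtain ⟨k, rfl⟩ : ∃ k, n = k + 1 := ⟨n - 1, by omega⟩
  calc m.choose 2 ≤ k.choose 2 := Nat.choose_le_choose 2 (by omega)
    _ < k + k.choose 2 := by omega
    _ = (k + 1).choose 2 := by rw [Nat.choose_succ_succ', Nat.choose_one_right]

lemma Sym2.card_filter_mem_of_not_isDiag {e : Sym2 V} (he : ¬e.IsDiag) (B : Finset V) :
    #{v ∈ B | v ∈ e} = (if ∃ v ∈ e, v ∈ B ∧ ∃ w ∈ e, w ∉ B then 1 else 0) +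
      (if ∀ v ∈ e, v ∈ B then 2 else 0) := by
  induction e with
  | _ a b =>
    rw [Sym2.mk_isDiag_iff] at he
    simp only [Sym2.mem_iff, filter_or, filter_eq', forall_eq_or_imp, forall_eq,
      exists_eq_or_imp]
    by_cases ha : a ∈ B <;> by_cases hb : b ∈ B <;> simp [ha, hb, he]

namespace SimpleGraph

variable (G : SimpleGraph V) [DecidableRel G.Adj]

lemma filter_edgeFinset_forall_mem_eq (B : Finset V) :
    {e ∈ G.edgeFinset | ∀ v ∈ e, v ∈ B} =
      {e ∈ B.offDiag.image Sym2.mk.uncurry | e ∈ G.edgeSet} := by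
  ext e
  induction e with
  | _ a b =>
    simp only [mem_filter, mem_edgeFinset, mem_edgeSet, Sym2.mem_iff, mem_image, mem_offDiag]
    constructor
    · rintro ⟨hab, hB⟩
      exact ⟨⟨(a, b), ⟨hB a (Or.inl rfl), hB b (Or.inr rfl), hab.ne⟩, rfl⟩, hab⟩
    · rintro ⟨⟨⟨x, y⟩, ⟨hx, hy, -⟩, hxy⟩, hab⟩
      simp only [Function.uncurry_apply_pair, Sym2.eq_iff] at hxy
      refine ⟨hab, ?_⟩
      rintro v (rfl | rfl) <;> grind

lemma innerEdges_le_choose (B : Finset V) : innerEdges G B ≤ (#B).choose 2 := by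
  rw [innerEdges, filter_edgeFinset_forall_mem_eq, ← Sym2.card_image_offDiag]
  exact card_filter_le _ _

lemma innerEdges_eq_choose_iff (B : Finset V) :
    innerEdges G B = (#B).choose 2 ↔ G.IsClique (B : Set V) := by
  rw [innerEdges, filter_edgeFinset_forall_mem_eq, ← Sym2.card_image_offDiag,
    card_filter_eq_iff]
  simp only [mem_image, mem_offDiag, Prod.exists, Function.uncurry_apply_pair]
  constructor
  · intro h a ha b hb hab
    exact h _ ⟨a, b, ⟨ha, hb, hab⟩, rfl⟩
  · rintro h _ ⟨a, b, ⟨ha, hb, hab⟩, rfl⟩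
    exact h ha hb hab

lemma crossEdges_add_two_mul_innerEdges {d : ℕ} (hreg : G.IsRegularOfDegree d) (B : Finset V) :
    crossEdges G B + 2 * innerEdges G B = #B * d :=
  calc crossEdges G B + 2 * innerEdges G B
      = ∑ e ∈ G.edgeFinset, #{v ∈ B | v ∈ e} := by
        rw [sum_congr rfl fun e he => Sym2.card_filter_mem_of_not_isDiag
          (G.not_isDiag_of_mem_edgeSet (mem_edgeFinset.1 he)) B, sum_add_distrib,
          ← sum_filter, ← sum_filter, sum_const, sum_const, crossEdges, innerEdges,
          smul_eq_mul, smul_eq_mul, mul_one, mul_comm]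
    _ = ∑ v ∈ B, #{e ∈ G.edgeFinset | v ∈ e} :=
        (sum_card_bipartiteAbove_eq_sum_card_bipartiteBelow _).symm
    _ = #B * d := by
        rw [sum_congr rfl fun v _ => by
          rw [← incidenceFinset_eq_filter, card_incidenceFinset_eq_degree, hreg v],
          sum_const, smul_eq_mul]

lemma exists_isNClique_of_choose_le_innerEdges [Nonempty V] {K : ℕ} {B : Finset V}
    (hBK : #B ≤ K) (hK : K.choose 2 ≤ innerEdges G B) : ∃ s : Finset V, G.IsNClique K s := by
  rcases Nat.lt_or_ge K 2 with hK2 | hK2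
  · interval_cases K
    · exact ⟨∅, isNClique_zero.2 rfl⟩
    · exact ⟨{Classical.arbitrary V}, isNClique_one.2 ⟨_, rfl⟩⟩
  have hBK' : #B = K := by
    refine le_antisymm hBK (le_of_not_gt fun hlt => ?_)
    have := hK.trans (G.innerEdges_le_choose B)
    exact (Nat.choose_two_lt_choose_two hlt hK2).not_ge this
  refine ⟨B, ?_, hBK'⟩
  rw [← innerEdges_eq_choose_iff]
  exact le_antisymm (G.innerEdges_le_choose B) (hBK' ▸ hK)

end SimpleGraph

theorem clique_iff_high_utility_bundle [Nonempty V]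
    (G : SimpleGraph V) [DecidableRel G.Adj] (d K : ℕ)
    (hreg : G.IsRegularOfDegree d) (u : ℝ) (hu : 2 < u) :
    (∀ B : Finset V, (crossEdges G B : ℝ) = B.card * d - 2 * innerEdges G B) ∧
    ((∃ B : Finset V, B.card ≤ K ∧
        (K : ℝ) * d + (u - 2) * (K * ((K : ℝ) - 1)) / 2 ≤
          (crossEdges G B : ℝ) + u * (innerEdges G B : ℝ)) ↔
      ∃ s : Finset V, G.IsNClique K s) := by
  have hcross (B : Finset V) : (crossEdges G B : ℝ) = #B * d - 2 * innerEdges G B := by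
    have := congrArg (Nat.cast (R := ℝ)) (G.crossEdges_add_two_mul_innerEdges hreg B)
    push_cast at this
    linarith
  refine ⟨hcross, fun ⟨B, hBK, hB⟩ => ?_, fun ⟨s, hs⟩ => ⟨s, hs.card_eq.le, ?_⟩⟩
  · refine G.exists_isNClique_of_choose_le_innerEdges hBK (Nat.cast_le (α := ℝ).1 ?_)
    have hBd : (#B : ℝ) * d ≤ K * d := by gcongr
    rw [Nat.cast_choose_two]
    rw [hcross] at hB
    nlinarith
  · rw [hcross, (G.innerEdges_eq_choose_iff s).2 hs.isClique, hs.card_eq, Nat.cast_choose_two]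
    linarith
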